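/- arXiv:1805.04156 — 2 statements merged into one kernel-verified Lean document; each statement's English description precedes it below -/
import Mathlib

section
/- Let φ = ψ₁ ∨ … ∨ ψ_k be a 3-DNF formula over the Boolean variables x₁,…,x_ℓ, where each term ψ_j is a conjunction of three literals a_j¹ ∧ a_j² ∧ a_j³ (each a literal x_i or ¬x_i). Then φ is a tautology (true under every truth assignment to x₁,…,x_ℓ) if and only if for every completion T of the tautology-reduction profile there exists some j ∈ {1,…,k} such that all three literals a_j¹, a_j², a_j³ are winners of T under r. -/
/-- The candidate set `C = {x₀} ∪ {x_i, ¬x_i : 1 ≤ i ≤ ℓ}`: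
`none` is the special candidate `x₀`, and `some (i, true)` / `some (i, false)`
are the literals `x_i` / `¬x_i`.  Thus `|C| = m = 2ℓ+1`. -/
abbrev Cand (ℓ : ℕ) := Option (Fin ℓ × Bool)

/-- The 0-based index of candidate `c` in the fixed enumeration `oth i` of the
`m − 2` candidates other than `x_i, ¬x_i` (the list `c₁,…,c_{m−2}`). -/
noncomputable def othIdx {ℓ : ℕ} (oth : Fin ℓ → Fin (2 * ℓ - 1) → Cand ℓ)
    (i : Fin ℓ) (c : Cand ℓ) : ℕ :=
  if h : ∃ q, oth i q = c then (h.choose : ℕ) else 0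

/-- The (1-based) position of candidate `c` in the base linear order
`c^i = (c₁,…,c_{d−1}, x_i, ¬x_i, c_d,…,c_{m−2})`. -/
noncomputable def viBasePos {ℓ : ℕ} (oth : Fin ℓ → Fin (2 * ℓ - 1) → Cand ℓ)
    (d : ℕ) (i : Fin ℓ) (c : Cand ℓ) : ℕ :=
  if c = some (i, true) then d
  else if c = some (i, false) then d + 1
  else if othIdx oth i c + 1 < d then othIdx oth i c + 1 else othIdx oth i c + 3

/-- The (1-based) position of candidate `c` in the linear order of voter `v_i^j`
(for `j ∈ {1,…,m−3}`): the candidates `c₁,…,c_{m−2}` are shifted cyclically `j`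
positions to the left, `x_i` is at position `d` and `¬x_i` at `d+1` when `j` is odd,
and they are swapped when `j` is even. -/
noncomputable def vijPos {ℓ : ℕ} (oth : Fin ℓ → Fin (2 * ℓ - 1) → Cand ℓ)
    (d : ℕ) (i : Fin ℓ) (j : ℕ) (c : Cand ℓ) : ℕ :=
  if c = some (i, true) then (if j % 2 = 1 then d else d + 1)
  else if c = some (i, false) then (if j % 2 = 1 then d + 1 else d)
  else
    let p := (othIdx oth i c + (2 * ℓ - 1) - j) % (2 * ℓ - 1) + 1
    if p < d then p else p + 2

/-- The (1-based) position of candidate `c` in the linear order of voter `u_j`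
(for `j ∈ {1,…,m−1}`): the literals `(c″₁,…,c″_{m−1}) = (x₁,¬x₁,…,x_ℓ,¬x_ℓ)`
shifted cyclically `j` positions to the left, followed by `x₀` at position `m`. -/
def uPos (ℓ : ℕ) (j : ℕ) (c : Cand ℓ) : ℕ :=
  match c with
  | none => 2 * ℓ + 1
  | some (i, b) => ((2 * (i : ℕ) + (if b then 0 else 1)) + 2 * ℓ - j) % (2 * ℓ) + 1

/-- `pos` is (the position function of) a linear order on the `m = 2ℓ+1` candidates:
it is injective with values in `{1,…,m}`. -/
def IsPosOrder (ℓ : ℕ) (pos : Cand ℓ → ℕ) : Prop :=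
  Function.Injective pos ∧ ∀ c, 1 ≤ pos c ∧ pos c ≤ 2 * ℓ + 1

/-- `Tv` is a completion of the tautology-reduction profile: `Tv i` is a linear order
extending the partial order of voter `v_i`, i.e. the order `c^i` with (only) the
comparison between `x_i` and `¬x_i` deleted.  (The orders of the voters `v_i^j` and
`u_j` are already total, so a completion is determined by the `Tv i`.) -/
def IsProfileCompletion {ℓ : ℕ} (oth : Fin ℓ → Fin (2 * ℓ - 1) → Cand ℓ)
    (d : ℕ) (Tv : Fin ℓ → Cand ℓ → ℕ) : Prop :=
  ∀ i, IsPosOrder ℓ (Tv i) ∧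
    ∀ a b, viBasePos oth d i a < viBasePos oth d i b →
      ¬(a = some (i, true) ∧ b = some (i, false)) → Tv i a < Tv i b

/-- The score `s(T,c)` of candidate `c` in the completion given by `Tv`: the sum over all
`n = ℓ(m−2)+(m−1)` voters (the `v_i`, the `v_i^j` for `j ∈ {1,…,m−3}`, and the `u_j` for
`j ∈ {1,…,m−1}`) of `r` applied to the position of `c`. -/
noncomputable def score {ℓ : ℕ} (r : ℕ → ℕ) (oth : Fin ℓ → Fin (2 * ℓ - 1) → Cand ℓ)
    (d : ℕ) (Tv : Fin ℓ → Cand ℓ → ℕ) (c : Cand ℓ) : ℕ :=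
  (∑ i : Fin ℓ, r (Tv i c)) +
  (∑ i : Fin ℓ, ∑ j ∈ Finset.Icc 1 (2 * ℓ - 2), r (vijPos oth d i j c)) +
  (∑ j ∈ Finset.Icc 1 (2 * ℓ), r (uPos ℓ j c))

/-- The completion `Tv` selects the literal `x_i` (if `b = true`) resp. `¬x_i`
(if `b = false`): the completion of voter `v_i` places it above its negation. -/
def Selects {ℓ : ℕ} (Tv : Fin ℓ → Cand ℓ → ℕ) (i : Fin ℓ) (b : Bool) : Prop :=
  if b then Tv i (some (i, true)) < Tv i (some (i, false))
  else Tv i (some (i, false)) < Tv i (some (i, true))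

/-- `c` is a winner of the completion `Tv`: it has maximum score. -/
noncomputable def IsWinner {ℓ : ℕ} (r : ℕ → ℕ) (oth : Fin ℓ → Fin (2 * ℓ - 1) → Cand ℓ)
    (d : ℕ) (Tv : Fin ℓ → Cand ℓ → ℕ) (c : Cand ℓ) : Prop :=
  ∀ c', score r oth d Tv c' ≤ score r oth d Tv c

lemma card_cand (ℓ : ℕ) : Fintype.card (Cand ℓ) = 2 * ℓ + 1 := by
  simp [Cand, Fintype.card_option, Fintype.card_prod]; ring

section
variable {ℓ : ℕ} {oth : Fin ℓ → Fin (2 * ℓ - 1) → Cand ℓ}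

lemma oth_surj (hℓ : 1 ≤ ℓ) (hinj : ∀ i, Function.Injective (oth i))
    (hne : ∀ i q, oth i q ≠ some (i, true) ∧ oth i q ≠ some (i, false))
    (i : Fin ℓ) (c : Cand ℓ) (h1 : c ≠ some (i, true)) (h2 : c ≠ some (i, false)) :
    ∃ q, oth i q = c := by
  have hsub : Finset.univ.image (oth i) ⊆
      (Finset.univ : Finset (Cand ℓ)) \ {some (i, true), some (i, false)} := by
    intro x hx
    simp only [Finset.mem_image] at hx
    obtain ⟨q, _, rfl⟩ := hx
    simp [Finset.mem_sdiff, (hne i q).1, (hne i q).2]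
  have hcard1 : (Finset.univ.image (oth i)).card = 2 * ℓ - 1 := by
    rw [Finset.card_image_of_injective _ (hinj i)]; simp
  have hcard2 : ((Finset.univ : Finset (Cand ℓ)) \ {some (i, true), some (i, false)}).card
      = 2 * ℓ - 1 := by
    rw [Finset.card_sdiff_of_subset (by simp)]
    have : ({some (i, true), some (i, false)} : Finset (Cand ℓ)).card = 2 := by
      rw [Finset.card_insert_of_notMem (by simp), Finset.card_singleton]
    rw [this, Finset.card_univ, card_cand]
    omega
  have heq := Finset.eq_of_subset_of_card_le hsub (by omega)
  have hc : c ∈ Finset.univ.image (oth i) := by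
    rw [heq]; simp [h1, h2]
  simpa using hc

lemma othIdx_spec (hℓ : 1 ≤ ℓ) (hinj : ∀ i, Function.Injective (oth i))
    (hne : ∀ i q, oth i q ≠ some (i, true) ∧ oth i q ≠ some (i, false))
    (i : Fin ℓ) (c : Cand ℓ) (h1 : c ≠ some (i, true)) (h2 : c ≠ some (i, false)) :
    ∃ h : othIdx oth i c < 2 * ℓ - 1, oth i ⟨othIdx oth i c, h⟩ = c := by
  have hex := oth_surj hℓ hinj hne i c h1 h2
  have : othIdx oth i c = (hex.choose : ℕ) := by rw [othIdx, dif_pos hex]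
  refine ⟨by rw [this]; exact (hex.choose).isLt, ?_⟩
  have : (⟨othIdx oth i c, by rw [this]; exact (hex.choose).isLt⟩ : Fin (2*ℓ-1))
      = hex.choose := by ext; simpa using this
  rw [this]; exact hex.choose_spec

end
def gfun (d q : ℕ) : ℕ := if q + 1 < d then q + 1 else q + 3

lemma gfun_ne (d q : ℕ) : gfun d q ≠ d ∧ gfun d q ≠ d + 1 := by
  unfold gfun; split <;> omega

lemma gfun_lt_or (d q : ℕ) : gfun d q < d ∨ d + 2 ≤ gfun d q := by
  unfold gfun; split <;> omega

lemma gfun_inj (d : ℕ) : ∀ q q', gfun d q = gfun d q' → q = q' := by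
  intro q q'; unfold gfun; split <;> split <;> omega

lemma gfun_range (d q M : ℕ) (hq : q < M) : 1 ≤ gfun d q ∧ gfun d q ≤ M + 2 := by
  unfold gfun; split <;> omega

-- counting lemmas
lemma count_below {α : Type*} [DecidableEq α] {m : ℕ} {t : α → ℕ}
    (ht : Function.Injective t) (htr : ∀ c, 1 ≤ t c ∧ t c ≤ m)
    (c : α) (S : Finset α) (hS : ∀ a ∈ S, t a < t c) : S.card + 1 ≤ t c := by
  have h1 : S.image t ⊆ Finset.Icc 1 (t c - 1) := by
    intro x hx
    simp only [Finset.mem_image] at hx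
    obtain ⟨a, ha, rfl⟩ := hx
    have := (htr a).1; have := hS a ha
    simp only [Finset.mem_Icc]; omega
  have h2 := Finset.card_le_card h1
  rw [Finset.card_image_of_injective _ ht, Nat.card_Icc] at h2
  have := (htr c).1
  omega

lemma count_above {α : Type*} [DecidableEq α] {m : ℕ} {t : α → ℕ}
    (ht : Function.Injective t) (htr : ∀ c, 1 ≤ t c ∧ t c ≤ m)
    (c : α) (S : Finset α) (hS : ∀ a ∈ S, t c < t a) : t c + S.card ≤ m := by
  have h1 : S.image t ⊆ Finset.Icc (t c + 1) m := by
    intro x hx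
    simp only [Finset.mem_image] at hx
    obtain ⟨a, ha, rfl⟩ := hx
    have := (htr a).2; have := hS a ha
    simp only [Finset.mem_Icc]; omega
  have h2 := Finset.card_le_card h1
  rw [Finset.card_image_of_injective _ ht, Nat.card_Icc] at h2
  have := (htr c).2
  omega

-- filter-card via image = Icc
lemma card_filter_lt {α : Type*} [Fintype α] [DecidableEq α] {m : ℕ} {f : α → ℕ}
    (hf : Function.Injective f) (himg : Finset.univ.image f = Finset.Icc 1 m)
    (K : ℕ) (hK : K ≤ m) :
    (Finset.univ.filter (fun a => f a < K)).card = K - 1 := by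
  have : (Finset.univ.filter (fun a => f a < K)).image f
      = (Finset.Icc 1 m).filter (fun p => p < K) := by
    rw [← himg]
    ext x
    simp only [Finset.mem_image, Finset.mem_filter, Finset.mem_univ, true_and]
    aesop
  have hc := congrArg Finset.card this
  rw [Finset.card_image_of_injective _ hf] at hc
  rw [hc]
  have : (Finset.Icc 1 m).filter (fun p => p < K) = Finset.Icc 1 (K - 1) := by
    ext p; simp only [Finset.mem_filter, Finset.mem_Icc]; omega
  rw [this, Nat.card_Icc]; omega

lemma card_filter_gt {α : Type*} [Fintype α] [DecidableEq α] {m : ℕ} {f : α → ℕ}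
    (hf : Function.Injective f) (himg : Finset.univ.image f = Finset.Icc 1 m)
    (K : ℕ) (hK : 1 ≤ K) :
    (Finset.univ.filter (fun a => K < f a)).card = m - K := by
  have : (Finset.univ.filter (fun a => K < f a)).image f
      = (Finset.Icc 1 m).filter (fun p => K < p) := by
    rw [← himg]
    ext x
    simp only [Finset.mem_image, Finset.mem_filter, Finset.mem_univ, true_and]
    aesop
  have hc := congrArg Finset.card this
  rw [Finset.card_image_of_injective _ hf] at hc
  rw [hc]
  have : (Finset.Icc 1 m).filter (fun p => K < p) = Finset.Icc (K+1) m := by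
    ext p; simp only [Finset.mem_filter, Finset.mem_Icc]; omega
  rw [this, Nat.card_Icc]; omega
section
variable {ℓ : ℕ} {oth : Fin ℓ → Fin (2 * ℓ - 1) → Cand ℓ} {d : ℕ}

lemma viBasePos_true (i : Fin ℓ) : viBasePos oth d i (some (i, true)) = d := by
  simp [viBasePos]

lemma viBasePos_false (i : Fin ℓ) : viBasePos oth d i (some (i, false)) = d + 1 := by
  simp [viBasePos]

lemma viBasePos_other (i : Fin ℓ) (c : Cand ℓ)
    (h1 : c ≠ some (i, true)) (h2 : c ≠ some (i, false)) :
    viBasePos oth d i c = gfun d (othIdx oth i c) := by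
  rw [viBasePos, if_neg h1, if_neg h2]; rfl

variable (hℓ : 1 ≤ ℓ) (hinj : ∀ i, Function.Injective (oth i))
  (hne : ∀ i q, oth i q ≠ some (i, true) ∧ oth i q ≠ some (i, false))
  (hd1 : 1 ≤ d) (hd2 : d ≤ 2 * ℓ)

include hℓ hinj hne in
lemma viBasePos_inj (i : Fin ℓ) : Function.Injective (viBasePos oth d i) := by
  intro a b hab
  by_cases ha1 : a = some (i, true)
  · subst ha1
    by_cases hb1 : b = some (i, true)
    · exact hb1.symm
    by_cases hb2 : b = some (i, false)
    · rw [viBasePos_true, hb2, viBasePos_false] at hab; omega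
    · rw [viBasePos_true, viBasePos_other i b hb1 hb2] at hab
      exact absurd hab.symm (gfun_ne d _).1
  by_cases ha2 : a = some (i, false)
  · subst ha2
    by_cases hb1 : b = some (i, true)
    · rw [viBasePos_false, hb1, viBasePos_true] at hab; omega
    by_cases hb2 : b = some (i, false)
    · exact hb2.symm
    · rw [viBasePos_false, viBasePos_other i b hb1 hb2] at hab
      exact absurd hab.symm (gfun_ne d _).2
  by_cases hb1 : b = some (i, true)
  · subst hb1
    rw [viBasePos_true, viBasePos_other i a ha1 ha2] at hab
    exact absurd hab (gfun_ne d _).1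
  by_cases hb2 : b = some (i, false)
  · subst hb2
    rw [viBasePos_false, viBasePos_other i a ha1 ha2] at hab
    exact absurd hab (gfun_ne d _).2
  · obtain ⟨la, ha⟩ := othIdx_spec hℓ hinj hne i a ha1 ha2
    obtain ⟨lb, hb⟩ := othIdx_spec hℓ hinj hne i b hb1 hb2
    rw [viBasePos_other i a ha1 ha2, viBasePos_other i b hb1 hb2] at hab
    have hq := gfun_inj d _ _ hab
    rw [← ha, ← hb]
    congr 1
    exact Fin.ext hq

include hℓ hinj hne hd1 hd2 in
lemma viBasePos_range (i : Fin ℓ) (c : Cand ℓ) :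
    1 ≤ viBasePos oth d i c ∧ viBasePos oth d i c ≤ 2 * ℓ + 1 := by
  by_cases h1 : c = some (i, true)
  · subst h1; rw [viBasePos_true]; omega
  by_cases h2 : c = some (i, false)
  · subst h2; rw [viBasePos_false]; omega
  obtain ⟨lc, -⟩ := othIdx_spec hℓ hinj hne i c h1 h2
  rw [viBasePos_other i c h1 h2]
  have := gfun_range d (othIdx oth i c) (2 * ℓ - 1) lc
  omega

include hℓ hinj hne hd1 hd2 in
lemma viBasePos_image (i : Fin ℓ) :
    Finset.univ.image (viBasePos oth d i) = Finset.Icc 1 (2 * ℓ + 1) := by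
  apply Finset.eq_of_subset_of_card_le
  · intro x hx
    simp only [Finset.mem_image] at hx
    obtain ⟨c, -, rfl⟩ := hx
    have := viBasePos_range hℓ hinj hne hd1 hd2 i c
    simp only [Finset.mem_Icc]; omega
  · rw [Finset.card_image_of_injective _ (viBasePos_inj hℓ hinj hne i),
      Finset.card_univ, card_cand, Nat.card_Icc]
    omega

include hℓ hinj hne hd1 hd2 in
lemma rigid {Tv : Fin ℓ → Cand ℓ → ℕ} (hTv : IsProfileCompletion oth d Tv) (i : Fin ℓ) :
    (∀ c, c ≠ some (i, true) → c ≠ some (i, false) → Tv i c = viBasePos oth d i c) ∧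
    ((Tv i (some (i, true)) = d ∧ Tv i (some (i, false)) = d + 1) ∨
     (Tv i (some (i, true)) = d + 1 ∧ Tv i (some (i, false)) = d)) := by
  classical
  obtain ⟨⟨htinj, htr⟩, horder⟩ := hTv i
  have hbpinj := viBasePos_inj hℓ hinj hne (d := d) i
  have hbpim := viBasePos_image hℓ hinj hne hd1 hd2 i
  have hbpr := viBasePos_range hℓ hinj hne hd1 hd2 (d := d) i
  have key : ∀ c, c ≠ some (i, true) → c ≠ some (i, false) → Tv i c = viBasePos oth d i c := by
    intro c h1 h2
    have hblo : ∀ a ∈ Finset.univ.filter (fun a => viBasePos oth d i a < viBasePos oth d i c),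
        Tv i a < Tv i c := by
      intro a ha
      simp only [Finset.mem_filter] at ha
      exact horder a c ha.2 (fun h => h2 h.2)
    have hlo := count_below htinj htr c _ hblo
    rw [card_filter_lt hbpinj hbpim (viBasePos oth d i c) (hbpr c).2] at hlo
    have hbhi : ∀ a ∈ Finset.univ.filter (fun a => viBasePos oth d i c < viBasePos oth d i a),
        Tv i c < Tv i a := by
      intro a ha
      simp only [Finset.mem_filter] at ha
      exact horder c a ha.2 (fun h => h1 h.1)
    have hhi := count_above htinj htr c _ hbhi
    rw [card_filter_gt hbpinj hbpim (viBasePos oth d i c) (hbpr c).1] at hhi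
    have := (hbpr c).1; have := (hbpr c).2; have := (htr c).2
    omega
  refine ⟨key, ?_⟩
  have hxlo : ∀ a ∈ Finset.univ.filter (fun a => viBasePos oth d i a < d),
      Tv i a < Tv i (some (i, true)) := by
    intro a ha
    simp only [Finset.mem_filter] at ha
    refine horder a _ (by rw [viBasePos_true]; exact ha.2) ?_
    rintro ⟨rfl, -⟩
    rw [viBasePos_true] at ha; omega
  have hx1 := count_below htinj htr (some (i, true)) _ hxlo
  rw [card_filter_lt hbpinj hbpim d (by omega)] at hx1
  have hxhi : ∀ a ∈ Finset.univ.filter (fun a => d + 1 < viBasePos oth d i a),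
      Tv i (some (i, true)) < Tv i a := by
    intro a ha
    simp only [Finset.mem_filter] at ha
    refine horder _ a (by rw [viBasePos_true]; omega) ?_
    rintro ⟨-, rfl⟩
    rw [viBasePos_false] at ha; omega
  have hx2 := count_above htinj htr (some (i, true)) _ hxhi
  rw [card_filter_gt hbpinj hbpim (d + 1) (by omega)] at hx2
  have hylo : ∀ a ∈ Finset.univ.filter (fun a => viBasePos oth d i a < d),
      Tv i a < Tv i (some (i, false)) := by
    intro a ha
    simp only [Finset.mem_filter] at ha
    refine horder a _ (by rw [viBasePos_false]; omega) ?_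
    rintro ⟨rfl, -⟩
    rw [viBasePos_true] at ha; omega
  have hy1 := count_below htinj htr (some (i, false)) _ hylo
  rw [card_filter_lt hbpinj hbpim d (by omega)] at hy1
  have hyhi : ∀ a ∈ Finset.univ.filter (fun a => d + 1 < viBasePos oth d i a),
      Tv i (some (i, false)) < Tv i a := by
    intro a ha
    simp only [Finset.mem_filter] at ha
    refine horder _ a (by rw [viBasePos_false]; exact ha.2) ?_
    rintro ⟨h, -⟩
    simp at h
  have hy2 := count_above htinj htr (some (i, false)) _ hyhi
  rw [card_filter_gt hbpinj hbpim (d + 1) (by omega)] at hy2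
  have hne' : Tv i (some (i, true)) ≠ Tv i (some (i, false)) := by
    intro h
    have := htinj h
    simp at this
  have h1 := (htr (some (i, true))).2
  have h2 := (htr (some (i, false))).2
  omega
end
lemma mod_helper (N e j : ℕ) (hN : 0 < N) (he : e < N) (hj1 : 1 ≤ j) (hj2 : j ≤ N) :
    (e + N - j) % N = if j ≤ e then e - j else e + N - j := by
  split
  · have h : e + N - j = (e - j) + N := by omega
    rw [h, Nat.add_mod_right]
    exact Nat.mod_eq_of_lt (by omega)
  · exact Nat.mod_eq_of_lt (by omega)

lemma cyc (N e : ℕ) (hN : 0 < N) (he : e < N) (f : ℕ → ℕ) :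
    ∑ j ∈ Finset.Icc 1 N, f ((e + N - j) % N) = ∑ q ∈ Finset.range N, f q := by
  refine Finset.sum_nbij' (fun j => (e + N - j) % N)
    (fun q => if q < e then e - q else e + N - q) ?_ ?_ ?_ ?_ ?_
  · intro a _
    simp only [Finset.mem_range]
    exact Nat.mod_lt _ hN
  · intro q hq
    simp only [Finset.mem_range] at hq
    simp only [Finset.mem_Icc]
    split <;> omega
  · intro a ha
    simp only [Finset.mem_Icc] at ha
    rw [mod_helper N e a hN he ha.1 ha.2]
    split_ifs <;> omega
  · intro q hq
    simp only [Finset.mem_range] at hq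
    have hj1 : 1 ≤ (if q < e then e - q else e + N - q) := by split <;> omega
    have hj2 : (if q < e then e - q else e + N - q) ≤ N := by split <;> omega
    rw [mod_helper N e _ hN he hj1 hj2]
    split_ifs <;> omega
  · intro a _
    rfl

lemma parity_sum (A B : ℕ) : ∀ k : ℕ,
    ∑ j ∈ Finset.Icc 1 (2 * k), (if j % 2 = 1 then A else B) = k * (A + B) := by
  intro k
  induction k with
  | zero => simp
  | succ k ih =>
    have h2 : 2 * (k + 1) = (2 * k + 1) + 1 := by ring
    rw [h2, Finset.sum_Icc_succ_top (by omega), Finset.sum_Icc_succ_top (by omega), ih]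
    have ha : (2 * k + 1) % 2 = 1 := by omega
    have hb : (2 * k + 1 + 1) % 2 = 0 := by omega
    rw [if_pos ha, if_neg (by omega)]
    ring

lemma bS_eq {ℓ d : ℕ} (hℓ : 1 ≤ ℓ) (hd1 : 1 ≤ d) (hd2 : d ≤ 2 * ℓ) (r : ℕ → ℕ) :
    (∑ q ∈ Finset.range (2 * ℓ - 1), r (gfun d q)) + (r d + r (d + 1))
      = ∑ p ∈ Finset.Icc 1 (2 * ℓ + 1), r p := by
  classical
  have himg : (Finset.range (2 * ℓ - 1)).image (gfun d)
      = ((Finset.Icc 1 (2 * ℓ + 1)).erase d).erase (d + 1) := by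
    apply Finset.eq_of_subset_of_card_le
    · intro x hx
      simp only [Finset.mem_image, Finset.mem_range] at hx
      obtain ⟨q, hq, rfl⟩ := hx
      have hr := gfun_range d q (2 * ℓ - 1) hq
      have hn := gfun_ne d q
      simp only [Finset.mem_erase, Finset.mem_Icc]
      exact ⟨hn.2, hn.1, by omega, by omega⟩
    · have hc1 : ((Finset.range (2 * ℓ - 1)).image (gfun d)).card = 2 * ℓ - 1 := by
        rw [Finset.card_image_of_injective _ (fun a b h => gfun_inj d a b h)]
        simp
      have hmem1 : d ∈ Finset.Icc 1 (2 * ℓ + 1) := by simp only [Finset.mem_Icc]; omega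
      have hmem2 : d + 1 ∈ (Finset.Icc 1 (2 * ℓ + 1)).erase d := by
        simp only [Finset.mem_erase, Finset.mem_Icc]; omega
      rw [hc1, Finset.card_erase_of_mem hmem2, Finset.card_erase_of_mem hmem1, Nat.card_Icc]
      omega
  have hsum : ∑ q ∈ Finset.range (2 * ℓ - 1), r (gfun d q)
      = ∑ p ∈ ((Finset.Icc 1 (2 * ℓ + 1)).erase d).erase (d + 1), r p := by
    rw [← himg, Finset.sum_image (fun a _ b _ h => gfun_inj d a b h)]
  have hmem1 : d ∈ Finset.Icc 1 (2 * ℓ + 1) := by simp only [Finset.mem_Icc]; omega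
  have hmem2 : d + 1 ∈ (Finset.Icc 1 (2 * ℓ + 1)).erase d := by
    simp only [Finset.mem_erase, Finset.mem_Icc]; omega
  have h1 := Finset.add_sum_erase _ r hmem1
  have h2 := Finset.add_sum_erase _ r hmem2
  omega

lemma icc_to_range (m : ℕ) (r : ℕ → ℕ) :
    ∑ p ∈ Finset.Icc 1 m, r p = ∑ q ∈ Finset.range m, r (q + 1) := by
  refine Finset.sum_nbij' (fun p => p - 1) (fun q => q + 1) ?_ ?_ ?_ ?_ ?_
  · intro a ha; simp only [Finset.mem_Icc] at ha; simp only [Finset.mem_range]; omega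
  · intro a ha; simp only [Finset.mem_range] at ha; simp only [Finset.mem_Icc]; omega
  · intro a ha; simp only [Finset.mem_Icc] at ha; omega
  · intro a _; omega
  · intro a ha
    simp only [Finset.mem_Icc] at ha
    congr 1
    omega
section
variable {ℓ : ℕ} {oth : Fin ℓ → Fin (2 * ℓ - 1) → Cand ℓ} {d : ℕ} {r : ℕ → ℕ}

lemma vijPos_true (i : Fin ℓ) (j : ℕ) :
    vijPos oth d i j (some (i, true)) = if j % 2 = 1 then d else d + 1 := by
  simp [vijPos]

lemma vijPos_false (i : Fin ℓ) (j : ℕ) :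
    vijPos oth d i j (some (i, false)) = if j % 2 = 1 then d + 1 else d := by
  simp [vijPos]

lemma vijPos_other (i : Fin ℓ) (j : ℕ) (c : Cand ℓ)
    (h1 : c ≠ some (i, true)) (h2 : c ≠ some (i, false)) :
    vijPos oth d i j c = gfun d ((othIdx oth i c + (2 * ℓ - 1) - j) % (2 * ℓ - 1)) := by
  rw [vijPos, if_neg h1, if_neg h2]
  simp only [gfun]

lemma uPos_none (j : ℕ) : uPos ℓ j none = 2 * ℓ + 1 := rfl

lemma uPos_some (i : Fin ℓ) (b : Bool) (j : ℕ) :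
    uPos ℓ j (some (i, b)) = ((2 * (i : ℕ) + (if b then 0 else 1)) + 2 * ℓ - j) % (2 * ℓ) + 1 :=
  rfl

variable (hℓ : 1 ≤ ℓ) (hinj : ∀ i, Function.Injective (oth i))
  (hne : ∀ i q, oth i q ≠ some (i, true) ∧ oth i q ≠ some (i, false))
  (hd1 : 1 ≤ d) (hd2 : d ≤ 2 * ℓ)

include hℓ hinj hne hd1 hd2 in
lemma block_other {Tv : Fin ℓ → Cand ℓ → ℕ} (hTv : IsProfileCompletion oth d Tv)
    (i : Fin ℓ) (c : Cand ℓ) (h1 : c ≠ some (i, true)) (h2 : c ≠ some (i, false)) :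
    r (Tv i c) + ∑ j ∈ Finset.Icc 1 (2 * ℓ - 2), r (vijPos oth d i j c)
      = ∑ q ∈ Finset.range (2 * ℓ - 1), r (gfun d q) := by
  obtain ⟨he, _⟩ := othIdx_spec hℓ hinj hne i c h1 h2
  have hM : 0 < 2 * ℓ - 1 := by omega
  have hcyc := cyc (2 * ℓ - 1) (othIdx oth i c) hM he (fun q => r (gfun d q))
  have hins : Finset.Icc 1 (2 * ℓ - 1) = insert (2 * ℓ - 1) (Finset.Icc 1 (2 * ℓ - 2)) := by
    ext p
    simp only [Finset.mem_Icc, Finset.mem_insert]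
    omega
  rw [hins, Finset.sum_insert (by simp only [Finset.mem_Icc]; omega)] at hcyc
  have hee : (othIdx oth i c + (2 * ℓ - 1) - (2 * ℓ - 1)) % (2 * ℓ - 1) = othIdx oth i c := by
    rw [Nat.add_sub_cancel]
    exact Nat.mod_eq_of_lt he
  rw [hee] at hcyc
  rw [(rigid hℓ hinj hne hd1 hd2 hTv i).1 c h1 h2, viBasePos_other i c h1 h2]
  rw [Finset.sum_congr rfl (fun j _ => by rw [vijPos_other i j c h1 h2])]
  exact hcyc

lemma block_own (i : Fin ℓ) (b : Bool) (hℓ' : 1 ≤ ℓ) :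
    ∑ j ∈ Finset.Icc 1 (2 * ℓ - 2), r (vijPos oth d i j (some (i, b)))
      = (ℓ - 1) * (r d + r (d + 1)) := by
  have h2 : 2 * ℓ - 2 = 2 * (ℓ - 1) := by omega
  cases b
  · rw [Finset.sum_congr rfl (fun j _ => by rw [vijPos_false i j, apply_ite r]), h2,
      parity_sum]
    ring
  · rw [Finset.sum_congr rfl (fun j _ => by rw [vijPos_true i j, apply_ite r]), h2,
      parity_sum]

lemma usum_none : ∑ j ∈ Finset.Icc 1 (2 * ℓ), r (uPos ℓ j none) = 2 * ℓ * r (2 * ℓ + 1) := by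
  rw [Finset.sum_congr rfl (fun j _ => by rw [uPos_none])]
  rw [Finset.sum_const, Nat.card_Icc]
  simp [Nat.smul_one_eq_cast]

lemma usum_some (i : Fin ℓ) (b : Bool) (hℓ' : 1 ≤ ℓ) :
    ∑ j ∈ Finset.Icc 1 (2 * ℓ), r (uPos ℓ j (some (i, b)))
      = ∑ q ∈ Finset.range (2 * ℓ), r (q + 1) := by
  have he : 2 * (i : ℕ) + (if b then 0 else 1) < 2 * ℓ := by
    have := i.isLt
    split <;> omega
  have hcyc := cyc (2 * ℓ) (2 * (i : ℕ) + (if b then 0 else 1)) (by omega) he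
    (fun q => r (q + 1))
  rw [Finset.sum_congr rfl (fun j _ => by rw [uPos_some i b j])]
  exact hcyc
end
section
variable {ℓ : ℕ} {oth : Fin ℓ → Fin (2 * ℓ - 1) → Cand ℓ} {d : ℕ} {r : ℕ → ℕ}
  (hℓ : 1 ≤ ℓ) (hinj : ∀ i, Function.Injective (oth i))
  (hne : ∀ i q, oth i q ≠ some (i, true) ∧ oth i q ≠ some (i, false))
  (hd1 : 1 ≤ d) (hd2 : d ≤ 2 * ℓ)

include hℓ hinj hne hd1 hd2 in
lemma score_none {Tv : Fin ℓ → Cand ℓ → ℕ} (hTv : IsProfileCompletion oth d Tv) :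
    score r oth d Tv none
      = ℓ * (∑ q ∈ Finset.range (2 * ℓ - 1), r (gfun d q)) + 2 * ℓ * r (2 * ℓ + 1) := by
  rw [score, usum_none, ← Finset.sum_add_distrib]
  congr 1
  rw [Finset.sum_congr rfl
    (fun i _ => block_other hℓ hinj hne hd1 hd2 hTv i none (by simp) (by simp))]
  rw [Finset.sum_const, Finset.card_univ, Fintype.card_fin, smul_eq_mul]

lemma lit_ne (i i' : Fin ℓ) (hii : i' ≠ i) (b b' : Bool) :
    (some (i, b) : Cand ℓ) ≠ some (i', b') := by
  simp only [ne_eq, Option.some.injEq, Prod.mk.injEq, not_and]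
  intro h
  exact absurd h.symm hii

include hℓ hinj hne hd1 hd2 in
lemma score_lit {Tv : Fin ℓ → Cand ℓ → ℕ} (hTv : IsProfileCompletion oth d Tv)
    (i : Fin ℓ) (b : Bool) :
    score r oth d Tv (some (i, b))
      = (ℓ - 1) * (∑ q ∈ Finset.range (2 * ℓ - 1), r (gfun d q))
        + (ℓ - 1) * (r d + r (d + 1)) + r (Tv i (some (i, b)))
        + ∑ q ∈ Finset.range (2 * ℓ), r (q + 1) := by
  rw [score, usum_some i b hℓ, ← Finset.sum_add_distrib,
    ← Finset.add_sum_erase Finset.univ _ (Finset.mem_univ i), block_own i b hℓ]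
  rw [Finset.sum_congr rfl (fun i' hi' =>
    block_other hℓ hinj hne hd1 hd2 hTv i' (some (i, b))
      (lit_ne i i' (Finset.mem_erase.mp hi').1 b true)
      (lit_ne i i' (Finset.mem_erase.mp hi').1 b false))]
  rw [Finset.sum_const, Finset.card_erase_of_mem (Finset.mem_univ i),
    Finset.card_univ, Fintype.card_fin, smul_eq_mul]
  ring

include hℓ hinj hne hd1 hd2 in
lemma sel_pos {Tv : Fin ℓ → Cand ℓ → ℕ} (hTv : IsProfileCompletion oth d Tv)
    (i : Fin ℓ) (b : Bool) (hs : Selects Tv i b) :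
    Tv i (some (i, b)) = d ∧ Tv i (some (i, !b)) = d + 1 := by
  have hr := (rigid hℓ hinj hne hd1 hd2 hTv i).2
  rcases hr with ⟨ha, hb⟩ | ⟨ha, hb⟩ <;> cases b <;> simp [Selects] at hs <;>
    simp only [Bool.not_true, Bool.not_false] <;> omega

include hℓ hinj hne hd1 hd2 in
lemma lit_pos {Tv : Fin ℓ → Cand ℓ → ℕ} (hTv : IsProfileCompletion oth d Tv)
    (i : Fin ℓ) (b : Bool) :
    Tv i (some (i, b)) = d ∨ Tv i (some (i, b)) = d + 1 := by
  have hr := (rigid hℓ hinj hne hd1 hd2 hTv i).2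
  rcases hr with ⟨ha, hb⟩ | ⟨ha, hb⟩ <;> cases b <;> omega

lemma selects_or {Tv : Fin ℓ → Cand ℓ → ℕ} (hTv : IsProfileCompletion oth d Tv)
    (i : Fin ℓ) (b : Bool) : Selects Tv i b ∨ Selects Tv i (!b) := by
  have hne' : Tv i (some (i, true)) ≠ Tv i (some (i, false)) := by
    intro h
    have := (hTv i).1.1 h
    simp at this
  cases b <;> simp [Selects, Bool.not_true, Bool.not_false] <;> omega

variable (hr_mono : ∀ p q, 1 ≤ p → p ≤ q → q ≤ 2 * ℓ + 1 → r q ≤ r p)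
  (hrd : r (d + 1) < r d)

include hℓ hd1 hd2 hr_mono hrd in
lemma key_ineq :
    ℓ * (∑ q ∈ Finset.range (2 * ℓ - 1), r (gfun d q)) + 2 * ℓ * r (2 * ℓ + 1)
      < (ℓ - 1) * (∑ q ∈ Finset.range (2 * ℓ - 1), r (gfun d q))
        + (ℓ - 1) * (r d + r (d + 1)) + r d + ∑ q ∈ Finset.range (2 * ℓ), r (q + 1) := by
  have hX := bS_eq hℓ hd1 hd2 r
  have hU : (∑ q ∈ Finset.range (2 * ℓ), r (q + 1)) + r (2 * ℓ + 1)
      = ∑ p ∈ Finset.Icc 1 (2 * ℓ + 1), r p := by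
    rw [icc_to_range, Finset.sum_range_succ]
  obtain ⟨L, rfl⟩ : ∃ L, ℓ = L + 1 := ⟨ℓ - 1, by omega⟩
  simp only [Nat.add_sub_cancel] at *
  have h2 : r (2 * (L + 1) + 1) ≤ r (d + 1) :=
    hr_mono (d + 1) (2 * (L + 1) + 1) (by omega) (by omega) (by omega)
  have h1 : r (2 * (L + 1) + 1) + 1 ≤ r d := by omega
  have h5 : L * r (2 * (L + 1) + 1) ≤ L * r d := Nat.mul_le_mul_left L (by omega)
  have h6 : L * r (2 * (L + 1) + 1) ≤ L * r (d + 1) := Nat.mul_le_mul_left L h2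
  nlinarith [hX, hU, h1, h2, h5, h6]

include hℓ hinj hne hd1 hd2 hr_mono hrd in
lemma winner_of_selects {Tv : Fin ℓ → Cand ℓ → ℕ} (hTv : IsProfileCompletion oth d Tv)
    (i : Fin ℓ) (b : Bool) (hs : Selects Tv i b) : IsWinner r oth d Tv (some (i, b)) := by
  intro c'
  have hsc := score_lit (r := r) hℓ hinj hne hd1 hd2 hTv i b
  rw [(sel_pos hℓ hinj hne hd1 hd2 hTv i b hs).1] at hsc
  match c' with
  | none =>
    rw [score_none hℓ hinj hne hd1 hd2 hTv, hsc]
    exact le_of_lt (key_ineq hℓ hd1 hd2 hr_mono hrd)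
  | some (i', b') =>
    rw [score_lit hℓ hinj hne hd1 hd2 hTv i' b', hsc]
    have hp := lit_pos hℓ hinj hne hd1 hd2 hTv i' b'
    have : r (Tv i' (some (i', b'))) ≤ r d := by
      rcases hp with h | h <;> simp only [h] <;> omega
    omega

include hℓ hinj hne hd1 hd2 hrd in
lemma selects_of_winner {Tv : Fin ℓ → Cand ℓ → ℕ} (hTv : IsProfileCompletion oth d Tv)
    (i : Fin ℓ) (b : Bool) (hw : IsWinner r oth d Tv (some (i, b))) : Selects Tv i b := by
  by_contra hns
  have hs' : Selects Tv i (!b) := by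
    rcases selects_or hTv i b with h | h
    · exact absurd h hns
    · exact h
  have hpos := sel_pos hℓ hinj hne hd1 hd2 hTv i (!b) hs'
  rw [Bool.not_not] at hpos
  have h1 := score_lit (r := r) hℓ hinj hne hd1 hd2 hTv i b
  have h2 := score_lit (r := r) hℓ hinj hne hd1 hd2 hTv i (!b)
  rw [hpos.2] at h1
  rw [hpos.1] at h2
  have := hw (some (i, !b))
  omega
end
/-- The completion built from a truth assignment. -/
noncomputable def mkTv {ℓ : ℕ} (oth : Fin ℓ → Fin (2 * ℓ - 1) → Cand ℓ) (d : ℕ)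
    (v : Fin ℓ → Bool) : Fin ℓ → Cand ℓ → ℕ :=
  fun i c =>
    if c = some (i, true) then (if v i then d else d + 1)
    else if c = some (i, false) then (if v i then d + 1 else d)
    else viBasePos oth d i c

section
variable {ℓ : ℕ} {oth : Fin ℓ → Fin (2 * ℓ - 1) → Cand ℓ} {d : ℕ} {v : Fin ℓ → Bool}

lemma mkTv_true (i : Fin ℓ) : mkTv oth d v i (some (i, true)) = if v i then d else d + 1 := by
  simp [mkTv]

lemma mkTv_false (i : Fin ℓ) : mkTv oth d v i (some (i, false)) = if v i then d + 1 else d := by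
  simp [mkTv]

lemma mkTv_other (i : Fin ℓ) (c : Cand ℓ) (h1 : c ≠ some (i, true)) (h2 : c ≠ some (i, false)) :
    mkTv oth d v i c = viBasePos oth d i c := by
  rw [mkTv, if_neg h1, if_neg h2]

variable (hℓ : 1 ≤ ℓ) (hinj : ∀ i, Function.Injective (oth i))
  (hne : ∀ i q, oth i q ≠ some (i, true) ∧ oth i q ≠ some (i, false))
  (hd1 : 1 ≤ d) (hd2 : d ≤ 2 * ℓ)

include hℓ hinj hne hd1 hd2 in
lemma bp_other_facts (i : Fin ℓ) (c : Cand ℓ)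
    (h1 : c ≠ some (i, true)) (h2 : c ≠ some (i, false)) :
    (viBasePos oth d i c < d ∨ d + 2 ≤ viBasePos oth d i c)
      ∧ 1 ≤ viBasePos oth d i c ∧ viBasePos oth d i c ≤ 2 * ℓ + 1 := by
  refine ⟨?_, viBasePos_range hℓ hinj hne hd1 hd2 i c⟩
  rw [viBasePos_other i c h1 h2]
  exact gfun_lt_or d _

include hℓ hinj hne hd1 hd2 in
lemma mkTv_completion : IsProfileCompletion oth d (mkTv oth d v) := by
  intro i
  refine ⟨⟨?_, ?_⟩, ?_⟩
  · -- injectivity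
    intro a b hab
    by_cases ha1 : a = some (i, true)
    · subst ha1
      by_cases hb1 : b = some (i, true)
      · exact hb1.symm
      by_cases hb2 : b = some (i, false)
      · subst hb2
        rw [mkTv_true, mkTv_false] at hab
        cases hv : v i <;> simp [hv] at hab
      · exfalso
        rw [mkTv_true, mkTv_other i b hb1 hb2] at hab
        have := (bp_other_facts hℓ hinj hne hd1 hd2 i b hb1 hb2).1
        split_ifs at hab <;> omega
    by_cases ha2 : a = some (i, false)
    · subst ha2
      by_cases hb1 : b = some (i, true)
      · subst hb1
        rw [mkTv_false, mkTv_true] at hab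
        cases hv : v i <;> simp [hv] at hab
      by_cases hb2 : b = some (i, false)
      · exact hb2.symm
      · exfalso
        rw [mkTv_false, mkTv_other i b hb1 hb2] at hab
        have := (bp_other_facts hℓ hinj hne hd1 hd2 i b hb1 hb2).1
        split_ifs at hab <;> omega
    by_cases hb1 : b = some (i, true)
    · exfalso
      subst hb1
      rw [mkTv_true, mkTv_other i a ha1 ha2] at hab
      have := (bp_other_facts hℓ hinj hne hd1 hd2 i a ha1 ha2).1
      split_ifs at hab <;> omega
    by_cases hb2 : b = some (i, false)
    · exfalso
      subst hb2
      rw [mkTv_false, mkTv_other i a ha1 ha2] at hab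
      have := (bp_other_facts hℓ hinj hne hd1 hd2 i a ha1 ha2).1
      split_ifs at hab <;> omega
    · rw [mkTv_other i a ha1 ha2, mkTv_other i b hb1 hb2] at hab
      exact viBasePos_inj hℓ hinj hne i hab
  · -- range
    intro c
    by_cases h1 : c = some (i, true)
    · subst h1
      rw [mkTv_true]
      split <;> omega
    by_cases h2 : c = some (i, false)
    · subst h2
      rw [mkTv_false]
      split <;> omega
    · rw [mkTv_other i c h1 h2]
      exact (bp_other_facts hℓ hinj hne hd1 hd2 i c h1 h2).2
  · -- order preservation
    intro a b hab hpair
    by_cases ha1 : a = some (i, true)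
    · subst ha1
      rw [viBasePos_true] at hab
      by_cases hb1 : b = some (i, true)
      · subst hb1
        rw [viBasePos_true] at hab
        omega
      by_cases hb2 : b = some (i, false)
      · exact absurd ⟨rfl, hb2⟩ hpair
      · rw [mkTv_true, mkTv_other i b hb1 hb2]
        have hfb := (bp_other_facts hℓ hinj hne hd1 hd2 i b hb1 hb2).1
        rw [viBasePos_other i b hb1 hb2] at hab hfb ⊢
        split <;> omega
    by_cases ha2 : a = some (i, false)
    · subst ha2
      rw [viBasePos_false] at hab
      by_cases hb1 : b = some (i, true)
      · subst hb1
        rw [viBasePos_true] at hab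
        omega
      by_cases hb2 : b = some (i, false)
      · subst hb2
        rw [viBasePos_false] at hab
        omega
      · rw [mkTv_false, mkTv_other i b hb1 hb2]
        have hfb := (bp_other_facts hℓ hinj hne hd1 hd2 i b hb1 hb2).1
        rw [viBasePos_other i b hb1 hb2] at hab hfb ⊢
        split <;> omega
    · rw [mkTv_other i a ha1 ha2]
      have hfa := (bp_other_facts hℓ hinj hne hd1 hd2 i a ha1 ha2).1
      by_cases hb1 : b = some (i, true)
      · subst hb1
        rw [viBasePos_true] at hab
        rw [mkTv_true]
        split <;> omega
      by_cases hb2 : b = some (i, false)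
      · subst hb2
        rw [viBasePos_false] at hab
        rw [mkTv_false]
        split <;> omega
      · rw [mkTv_other i b hb1 hb2]
        exact hab

lemma mkTv_selects (i : Fin ℓ) (b : Bool) : Selects (mkTv oth d v) i b ↔ v i = b := by
  cases b <;> cases hv : v i <;>
    simp [Selects, mkTv_true, mkTv_false, hv]
end
/-- let `φ = ψ₁ ∨ … ∨ ψ_k` be a 3-DNF formula over `x₁,…,x_ℓ`, where term
`ψ_j` is the conjunction of the three literals given by `terms j` (a literal being a pair
`(i, b)` with `b = true` for `x_i` and `b = false` for `¬x_i`; the literal `(i, b)` is true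
under an assignment `v` iff `v i = b`).  Then `φ` is a tautology iff for every completion
`T` of the tautology-reduction profile some term has all three of its literals among the
winners of `T`. -/
theorem tautology_iff_all_completions_have_winning_term
    (ℓ : ℕ) (hℓ : 1 ≤ ℓ) (r : ℕ → ℕ)
    (hr_mono : ∀ p q, 1 ≤ p → p ≤ q → q ≤ 2 * ℓ + 1 → r q ≤ r p)
    (hr_strict : r (2 * ℓ + 1) < r 1)
    (d : ℕ) (hd1 : 1 ≤ d) (hd2 : d ≤ 2 * ℓ) (hrd : r (d + 1) < r d)
    (oth : Fin ℓ → Fin (2 * ℓ - 1) → Cand ℓ)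
    (hoth_inj : ∀ i, Function.Injective (oth i))
    (hoth_ne : ∀ i q, oth i q ≠ some (i, true) ∧ oth i q ≠ some (i, false))
    (k : ℕ) (terms : Fin k → (Fin ℓ × Bool) × (Fin ℓ × Bool) × (Fin ℓ × Bool)) :
    (∀ v : Fin ℓ → Bool, ∃ j : Fin k,
        v (terms j).1.1 = (terms j).1.2 ∧
        v (terms j).2.1.1 = (terms j).2.1.2 ∧
        v (terms j).2.2.1 = (terms j).2.2.2) ↔
    (∀ Tv : Fin ℓ → Cand ℓ → ℕ, IsProfileCompletion oth d Tv →
      ∃ j : Fin k,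
        IsWinner r oth d Tv (some (terms j).1) ∧
        IsWinner r oth d Tv (some (terms j).2.1) ∧
        IsWinner r oth d Tv (some (terms j).2.2)) := by
  have hmk : ∀ v : Fin ℓ → Bool, IsProfileCompletion oth d (mkTv oth d v) :=
    fun v => mkTv_completion hℓ hoth_inj hoth_ne hd1 hd2
  constructor
  · intro htaut Tv hTv
    obtain ⟨j, h1, h2, h3⟩ :=
      htaut (fun i => decide (Tv i (some (i, true)) < Tv i (some (i, false))))
    have hsel : ∀ (i : Fin ℓ) (b : Bool),
        decide (Tv i (some (i, true)) < Tv i (some (i, false))) = b → Selects Tv i b := by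
      intro i b hb
      have hne' : Tv i (some (i, true)) ≠ Tv i (some (i, false)) := by
        intro h
        have := (hTv i).1.1 h
        simp at this
      cases b
      · simp only [decide_eq_false_iff_not, not_lt] at hb
        simp only [Selects]
        simp only [if_neg (Bool.false_ne_true)]
        omega
      · simp only [decide_eq_true_eq] at hb
        simp only [Selects, if_pos rfl]
        exact hb
    have hw : ∀ (i : Fin ℓ) (b : Bool), Selects Tv i b → IsWinner r oth d Tv (some (i, b)) :=
      fun i b hs => winner_of_selects hℓ hoth_inj hoth_ne hd1 hd2 hr_mono hrd hTv i b hs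
    refine ⟨j, ?_, ?_, ?_⟩
    · simpa using hw _ _ (hsel _ _ h1)
    · simpa using hw _ _ (hsel _ _ h2)
    · simpa using hw _ _ (hsel _ _ h3)
  · intro hcomp v
    obtain ⟨j, w1, w2, w3⟩ := hcomp (mkTv oth d v) (hmk v)
    have hrev : ∀ (i : Fin ℓ) (b : Bool),
        IsWinner r oth d (mkTv oth d v) (some (i, b)) → v i = b := by
      intro i b hwin
      exact (mkTv_selects i b).mp
        (selects_of_winner hℓ hoth_inj hoth_ne hd1 hd2 hrd (hmk v) i b hwin)
    refine ⟨j, ?_, ?_, ?_⟩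
    · exact hrev _ _ (by simpa using w1)
    · exact hrev _ _ (by simpa using w2)
    · exact hrev _ _ (by simpa using w3)
end

section
/- Let Dom be a set, R ⊆ Dom × Dom a binary relation, and let φ = A₁ ∧ … ∧ A_t be a conjunction of relational atoms over distinct relation symbols S₁,…,Sـt (each symbol occurring in exactly one atom), with variables among {c, d, x₁,…,x_k}, such that c and d are connected in the Gaifman graph of φ. Define a database D over Dom by: for each atom A_s = S_s(z₁,…,z_{r_s}), the relation interpreting S_s in D is { (ν_{a,b}(z₁),…,ν_{a,b}(z_{r_s})) : (a,b) ∈ R }, where ν_{a,b} maps c to a and maps d and every x_i to b. Then for all a, b ∈ Dom: there exist b₁,…,b_k ∈ Dom such that the assignment c ↦ a, d ↦ b, x_i ↦ b_i satisfies every atom of φ in D, if and only if (a,b) ∈ R. -/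
/-- The assignment on the variables `{c, d, x₁,…,x_k}` (encoded as `Fin (k+2)` with
`0 = c`, `1 = d`, and `v` for `v ≥ 2` being `x_{v−1}`) that maps `c ↦ a`, `d ↦ b` and
`x_i ↦ bs i`. -/
def varAssign {Dom : Type*} {k : ℕ} (a b : Dom) (bs : Fin k → Dom) (v : Fin (k + 2)) : Dom :=
  if h0 : (v : ℕ) = 0 then a
  else if h1 : (v : ℕ) = 1 then b
  else bs ⟨(v : ℕ) - 2, by have := v.isLt; omega⟩


lemma varAssign_eq {Dom : Type*} {k : ℕ} (a b : Dom) (v : Fin (k + 2)) :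
    varAssign a b (fun _ => b) v = if (v : ℕ) = 0 then a else b := by
  unfold varAssign
  split
  · simp_all
  · split <;> simp_all

lemma varAssign_zero {Dom : Type*} {k : ℕ} (a b : Dom) (bs : Fin k → Dom) :
    varAssign a b bs 0 = a := by simp [varAssign]

lemma varAssign_one {Dom : Type*} {k : ℕ} (a b : Dom) (bs : Fin k → Dom) :
    varAssign a b bs 1 = b := by simp [varAssign]

/-- let `R ⊆ Dom × Dom` and let `φ = A₁ ∧ … ∧ A_t` be a conjunction of
relational atoms over pairwise distinct relation symbols `S₁,…,S_t` (so each symbol is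
identified with its unique atom `s : Fin t`, with arity `arity s` and argument variables
`args s`), with variables among `{c, d, x₁,…,x_k}`, such that `c` and `d` are connected in
the Gaifman graph of `φ`.  The database `D` interprets `S_s` as
`{ (ν_{a,b}(z₁),…,ν_{a,b}(z_{r_s})) : (a,b) ∈ R }`, where `ν_{a,b}` maps `c` to `a` and
`d` and every `x_i` to `b`.  Then for all `a, b ∈ Dom`: there exist `b₁,…,b_k` such that
the assignment `c ↦ a, d ↦ b, x_i ↦ b_i` satisfies every atom of `φ` in `D`, iff
`(a, b) ∈ R`. -/
theorem query_true_iff_mem_R {Dom : Type*} (R : Set (Dom × Dom)) (k t : ℕ)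
    (arity : Fin t → ℕ) (args : (s : Fin t) → Fin (arity s) → Fin (k + 2))
    (hconn : Relation.ReflTransGen
      (fun u v : Fin (k + 2) =>
        ∃ (s : Fin t) (p q : Fin (arity s)), args s p = u ∧ args s q = v)
      0 1)
    (a b : Dom) :
    (∃ bs : Fin k → Dom, ∀ s : Fin t,
        (fun p => varAssign a b bs (args s p)) ∈
          { f : Fin (arity s) → Dom |
            ∃ ab ∈ R, f = fun p => varAssign ab.1 ab.2 (fun _ => ab.2) (args s p) }) ↔
    (a, b) ∈ R := by
  constructor
  · rintro ⟨bs, hbs⟩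
    have key : ∀ v : Fin (k + 2),
        Relation.ReflTransGen
          (fun u v : Fin (k + 2) =>
            ∃ (s : Fin t) (p q : Fin (arity s)), args s p = u ∧ args s q = v) 0 v →
        v = 0 ∨ (a, varAssign a b bs v) ∈ R := by
      intro v hv
      induction hv with
      | refl => exact Or.inl rfl
      | @tail u w _ hedge ih =>
        obtain ⟨s, p, q, hp, hq⟩ := hedge
        obtain ⟨ab, habR, hfun⟩ := hbs s
        have hgp := congrFun hfun p
        have hgq := congrFun hfun q
        simp only [hp, hq, varAssign_eq] at hgp hgq
        by_cases hw0 : (w : ℕ) = 0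
        · exact Or.inl (Fin.ext hw0)
        · right
          rw [hgq, if_neg hw0]
          by_cases hu0 : (u : ℕ) = 0
          · have hu : u = 0 := Fin.ext hu0
            rw [if_pos hu0, hu, varAssign_zero] at hgp
            rw [hgp]
            exact habR
          · rcases ih with h0 | hR
            · exact absurd (congrArg Fin.val h0) hu0
            · rw [hgp, if_neg hu0] at hR
              exact hR
    rcases key 1 hconn with h | h
    · exact absurd (congrArg Fin.val h) (by simp)
    · rwa [varAssign_one] at h
  · intro hab
    exact ⟨fun _ => b, fun s => ⟨(a, b), hab, rfl⟩⟩
end
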